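/- arXiv:2010.07898 — 3 statements merged into one kernel-verified Lean document; each statement's English description precedes it below -/
import Mathlib

section
/- Let A be a d×d real matrix. Then the following are equivalent: (i) A is a completely positive matrix; (ii) the pair (A,A) (regarded over ℂ) is pairwise completely positive (PCP); (iii) the triple (A,A,A) (regarded over ℂ) is triplewise completely positive (TCP). -/
open Matrix

/-- A real matrix is completely positive if `A = V Vᵀ` for an entrywise nonnegative `V`. -/
def CompletelyPositive {d : ℕ} (A : Matrix (Fin d) (Fin d) ℝ) : Prop :=
  ∃ (d' : ℕ) (V : Matrix (Fin d) (Fin d') ℝ),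
    (∀ i j, 0 ≤ V i j) ∧ A = V * Vᵀ

/-- Pairwise complete positivity of a pair `(A,B)`. -/
def PCP {d : ℕ} (A B : Matrix (Fin d) (Fin d) ℂ) : Prop :=
  ∃ (d' : ℕ) (V W : Matrix (Fin d) (Fin d') ℂ),
    A = (V ⊙ V.map star) * (W ⊙ W.map star)ᴴ ∧
    B = (V ⊙ W) * (V ⊙ W)ᴴ

/-- Triplewise complete positivity of a triple `(A,B,C)`. -/
def TCP {d : ℕ} (A B C : Matrix (Fin d) (Fin d) ℂ) : Prop :=
  ∃ (d' : ℕ) (V W : Matrix (Fin d) (Fin d') ℂ),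
    A = (V ⊙ V.map star) * (W ⊙ W.map star)ᴴ ∧
    B = (V ⊙ W) * (V ⊙ W)ᴴ ∧
    C = (V ⊙ W.map star) * (V ⊙ W.map star)ᴴ

/-!
A completely positive `A = V Vᵀ` is triplewise completely positive with both factors equal to
the entrywise square root of `V`. Conversely, from a PCP representation of `(A, A)` the entrywise
modulus `U = |V ⊙ W|` is a nonnegative factor of `A`: the triangle inequality in
`A = (V ⊙ W)(V ⊙ W)ᴴ` gives `A ≤ U Uᵀ` entrywise, while AM–GM in `A = |V|² (|W|²)ᵀ` gives
`2 U Uᵀ ≤ A + Aᵀ = 2 A`, `A` being symmetric as a Gram matrix.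
-/

namespace Matrix

variable {l m n : Type*}

lemma conjTranspose_map_ofReal (M : Matrix m n ℝ) :
    (M.map Complex.ofReal)ᴴ = Mᵀ.map Complex.ofReal := by
  ext; simp

lemma map_ofReal_mul_conjTranspose [Fintype n] (M : Matrix m n ℝ) :
    M.map Complex.ofReal * (M.map Complex.ofReal)ᴴ = (M * Mᵀ).map Complex.ofReal := by
  rw [conjTranspose_map_ofReal]
  exact (Matrix.map_mul (f := Complex.ofRealHom)).symm

lemma hadamard_map_star_self (V : Matrix m n ℂ) :
    V ⊙ V.map star = (V.map Complex.normSq).map Complex.ofReal := by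
  ext; simp [Complex.mul_conj]

lemma hadamard_map_star_mul_conjTranspose [Fintype n] (V : Matrix l n ℂ) (W : Matrix m n ℂ) :
    (V ⊙ V.map star) * (W ⊙ W.map star)ᴴ =
      (V.map Complex.normSq * (W.map Complex.normSq)ᵀ).map Complex.ofReal := by
  rw [hadamard_map_star_self, hadamard_map_star_self, conjTranspose_map_ofReal]
  exact (Matrix.map_mul (f := Complex.ofRealHom)).symm

lemma isSymm_of_map_ofReal_eq_mul_conjTranspose [Fintype n] {M : Matrix m m ℝ} {X : Matrix m n ℂ}
    (h : M.map Complex.ofReal = X * Xᴴ) : M.IsSymm := by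
  have hM : (M.map Complex.ofReal).IsHermitian := h ▸ isHermitian_mul_conjTranspose_self X
  rw [IsHermitian, conjTranspose_map_ofReal] at hM
  exact Matrix.map_injective Complex.ofReal_injective hM

lemma norm_mul_conjTranspose_apply_le {𝕜 : Type*} [RCLike 𝕜] [Fintype n] (X : Matrix m n 𝕜) (i j : m) :
    ‖(X * Xᴴ) i j‖ ≤ (X.map (‖·‖) * (X.map (‖·‖))ᵀ) i j := by
  simp only [mul_apply, conjTranspose_apply, transpose_apply, map_apply]
  refine (norm_sum_le _ _).trans_eq (Finset.sum_congr rfl fun k _ => ?_)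
  rw [norm_mul, norm_star]

lemma two_mul_norm_hadamard_mul_transpose_apply_le [Fintype n] (V W : Matrix m n ℂ) (i j : m) :
    2 * ((V ⊙ W).map (‖·‖) * ((V ⊙ W).map (‖·‖))ᵀ) i j ≤
      (V.map Complex.normSq * (W.map Complex.normSq)ᵀ) i j +
        (V.map Complex.normSq * (W.map Complex.normSq)ᵀ) j i := by
  simp only [mul_apply, transpose_apply, map_apply, hadamard_apply, Finset.mul_sum,
    ← Finset.sum_add_distrib, Complex.normSq_eq_norm_sq, norm_mul]
  refine Finset.sum_le_sum fun k _ => ?_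
  convert two_mul_le_add_sq (‖V i k‖ * ‖W j k‖) (‖V j k‖ * ‖W i k‖) using 1 <;> ring

end Matrix

lemma CompletelyPositive.tcp {d : ℕ} {A : Matrix (Fin d) (Fin d) ℝ} (hA : CompletelyPositive A) :
    TCP (A.map Complex.ofReal) (A.map Complex.ofReal) (A.map Complex.ofReal) := by
  obtain ⟨d', V, hV, rfl⟩ := hA
  set S : Matrix (Fin d) (Fin d') ℂ := V.map fun x => (√x : ℂ)
  have hS_star : S.map star = S := by ext; simp [S]
  have hS_sq : S ⊙ S = V.map Complex.ofReal := by
    ext i k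
    simp [S, ← Complex.ofReal_mul, Real.mul_self_sqrt (hV i k)]
  refine ⟨d', S, S, ?_, ?_, ?_⟩ <;>
    simp only [hS_star, hS_sq, map_ofReal_mul_conjTranspose]

lemma TCP.pcp {d : ℕ} {A B C : Matrix (Fin d) (Fin d) ℂ} (h : TCP A B C) : PCP A B :=
  let ⟨d', V, W, hA, hB, _⟩ := h
  ⟨d', V, W, hA, hB⟩

lemma PCP.completelyPositive {d : ℕ} {A : Matrix (Fin d) (Fin d) ℝ}
    (h : PCP (A.map Complex.ofReal) (A.map Complex.ofReal)) : CompletelyPositive A := by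
  obtain ⟨d', V, W, hA, hB⟩ := h
  have hA_real : A = V.map Complex.normSq * (W.map Complex.normSq)ᵀ :=
    Matrix.map_injective Complex.ofReal_injective
      (hA.trans (hadamard_map_star_mul_conjTranspose V W))
  have hA_symm := isSymm_of_map_ofReal_eq_mul_conjTranspose hB
  set U := (V ⊙ W).map (‖·‖)
  refine ⟨d', U, fun i k => norm_nonneg ((V ⊙ W) i k), ?_⟩
  ext i j
  have upper : A i j ≤ (U * Uᵀ) i j :=
    calc A i j ≤ ‖(A i j : ℂ)‖ := by rw [Complex.norm_real]; exact Real.le_norm_self _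
      _ = ‖((V ⊙ W) * (V ⊙ W)ᴴ) i j‖ := by rw [← hB, map_apply]
      _ ≤ (U * Uᵀ) i j := norm_mul_conjTranspose_apply_le _ i j
  have lower : 2 * (U * Uᵀ) i j ≤ A i j + A j i := by
    rw [hA_real]; exact two_mul_norm_hadamard_mul_transpose_apply_le V W i j
  have : A j i = A i j := hA_symm.apply i j
  linarith

theorem stmt4 {d : ℕ} (A : Matrix (Fin d) (Fin d) ℝ) :
    [CompletelyPositive A,
     PCP (A.map Complex.ofReal) (A.map Complex.ofReal),
     TCP (A.map Complex.ofReal) (A.map Complex.ofReal) (A.map Complex.ofReal)].TFAE := by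
  tfae_have 1 → 3 := CompletelyPositive.tcp
  tfae_have 3 → 2 := TCP.pcp
  tfae_have 2 → 1 := PCP.completelyPositive
  tfae_finish
end

section
/- Let A, B, C be d×d complex matrices with equal diagonals. Then: (1) X^{(3)}_{(A,B,C)} is positive semidefinite if and only if every entry of A is a nonnegative real number, B is positive semidefinite, C is Hermitian, and A_ij·A_ji ≥ |C_ij|² for all i,j ∈ [d]; (2) the partial transpose (X^{(3)}_{(A,B,C)})^Γ is positive semidefinite if and only if every entry of A is a nonnegative real number, B is Hermitian, C is positive semidefinite, and A_ij·A_ji ≥ |B_ij|² for all i,j ∈ [d]. -/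
/-!
Splitting the index pairs `(i, j)` into the diagonal ones `i = j` and the off-diagonal ones,
`X^{(3)}_{(A,B,C)}` is the sum of `B`, placed on the diagonal pairs, and of the `2 × 2` blocks
`[[A_ij, C_ij], [C_ji, A_ji]]` acting on `span {|ij⟩, |ji⟩}` for `i ≠ j`. Both `B` and these blocks
(thanks to the equal diagonals, also for `i = j`) are principal submatrices of `X^{(3)}`, so
`X^{(3)} ⪰ 0` iff `B ⪰ 0` and every block is `⪰ 0`, and a `2 × 2` Hermitian matrix is positive
semidefinite iff its diagonal is nonnegative and its determinant is. The partial transpose of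
`X^{(3)}_{(A,B,C)}` is `X^{(3)}_{(A,C,B)}`, which gives the second equivalence.
-/

open Matrix
open scoped ComplexOrder

/-- The LDOI matrix `X^{(3)}_{(A,B,C)}` associated to a triple of `d × d` matrices. -/
def X3 {d : ℕ} (A B C : Matrix (Fin d) (Fin d) ℂ) :
    Matrix (Fin d × Fin d) (Fin d × Fin d) ℂ :=
  Matrix.of fun p q =>
    if p.1 = q.1 ∧ p.2 = q.2 then A p.1 p.2
    else if p.1 = p.2 ∧ q.1 = q.2 then B p.1 q.1
    else if p.1 = q.2 ∧ p.2 = q.1 then C p.1 q.1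
    else 0

/-- The partial transpose (on the second factor) of a bipartite matrix:
`⟨ik|X^Γ|jl⟩ = ⟨il|X|jk⟩`. -/
def partialTranspose {d : ℕ} (X : Matrix (Fin d × Fin d) (Fin d × Fin d) ℂ) :
    Matrix (Fin d × Fin d) (Fin d × Fin d) ℂ :=
  Matrix.of fun p q => X (p.1, q.2) (q.1, p.2)

theorem two_mul_mul_le_of_sq_le {r s t : ℝ} (hr : 0 ≤ r) (hs : 0 ≤ s) (ht : t ^ 2 ≤ r * s)
    (x y : ℝ) : 2 * t * x * y ≤ r * x ^ 2 + s * y ^ 2 := by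
  rcases hr.eq_or_lt with rfl | hr
  · obtain rfl : t = 0 := by nlinarith [sq_nonneg t]
    nlinarith [mul_nonneg hs (sq_nonneg y)]
  · have : 0 ≤ r * (r * x ^ 2 + s * y ^ 2 - 2 * t * x * y) := by
      nlinarith [sq_nonneg (r * x - t * y), mul_nonneg (sub_nonneg.2 ht) (sq_nonneg y)]
    linarith [(mul_nonneg_iff_of_pos_left hr).1 this]

theorem Complex.sum_nonneg_of_add_swap_nonneg {α : Type*} [Fintype α] (f : α × α → ℂ)
    (h : ∀ p, 0 ≤ f p + f p.swap) : 0 ≤ ∑ p, f p := by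
  have hswap : ∑ p : α × α, f p.swap = ∑ p, f p :=
    Fintype.sum_equiv (Equiv.prodComm α α) _ _ fun _ => rfl
  have hhalf : (0 : ℂ) ≤ 2⁻¹ := Complex.nonneg_iff.2 ⟨by norm_num, by norm_num⟩
  have hsum : 0 ≤ ∑ p, (f p + f p.swap) := Finset.sum_nonneg fun p _ => h p
  rw [Finset.sum_add_distrib, hswap, ← two_mul] at hsum
  simpa [← mul_assoc] using mul_nonneg hhalf hsum

theorem Matrix.posSemidef_fin_two_iff {M : Matrix (Fin 2) (Fin 2) ℂ} :
    M.PosSemidef ↔ 0 ≤ M 0 0 ∧ 0 ≤ M 1 1 ∧ M 1 0 = star (M 0 1) ∧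
      ‖M 0 1‖ ^ 2 ≤ (M 0 0).re * (M 1 1).re := by
  constructor
  · intro hM
    have h10 : M 1 0 = star (M 0 1) := (hM.isHermitian.apply 1 0).symm
    refine ⟨hM.diag_nonneg, hM.diag_nonneg, h10, ?_⟩
    have hdet : (0 : ℂ) ≤ ((M 0 0).re * (M 1 1).re - ‖M 0 1‖ ^ 2 : ℝ) := by
      rw [Complex.ofReal_sub, Complex.ofReal_mul, Complex.ofReal_pow,
        ← Complex.eq_re_of_ofReal_le hM.diag_nonneg, ← Complex.eq_re_of_ofReal_le hM.diag_nonneg,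
        ← Complex.mul_conj', ← Complex.star_def, ← h10, ← det_fin_two]
      exact hM.det_nonneg
    linarith [Complex.zero_le_real.1 hdet]
  · rintro ⟨h00, h11, h10, hbound⟩
    have hM : M.IsHermitian := by
      ext i j
      fin_cases i <;> fin_cases j <;>
        simp [h10, (IsSelfAdjoint.of_nonneg h00).star_eq, (IsSelfAdjoint.of_nonneg h11).star_eq]
    refine PosSemidef.of_dotProduct_mulVec_nonneg hM fun v => ?_
    refine RCLike.nonneg_iff.2 ⟨?_, hM.im_star_dotProduct_mulVec_self v⟩
    have hform : (star v ⬝ᵥ M *ᵥ v).re =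
        (M 0 0).re * ‖v 0‖ ^ 2 + (M 1 1).re * ‖v 1‖ ^ 2 + 2 * (star (v 0) * M 0 1 * v 1).re := by
      rw [Complex.eq_re_of_ofReal_le h00, Complex.eq_re_of_ofReal_le h11]
      simp only [dotProduct, mulVec, Fin.sum_univ_two, h10, Pi.star_apply, Complex.add_re,
        Complex.add_im, Complex.mul_re, Complex.mul_im, Complex.star_def, Complex.conj_re,
        Complex.conj_im, Complex.ofReal_re, Complex.sq_norm, Complex.normSq_apply]
      ring
    have hcross : -(‖M 0 1‖ * ‖v 0‖ * ‖v 1‖) ≤ (star (v 0) * M 0 1 * v 1).re := by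
      have := (abs_le.1 (Complex.abs_re_le_norm (star (v 0) * M 0 1 * v 1))).1
      simp only [norm_mul, norm_star] at this
      linarith
    have := two_mul_mul_le_of_sq_le (Complex.nonneg_iff.1 h00).1 (Complex.nonneg_iff.1 h11).1
      hbound ‖v 0‖ ‖v 1‖
    rw [RCLike.re_to_complex]
    linarith

section

variable {d : ℕ}

theorem partialTranspose_X3 (A B C : Matrix (Fin d) (Fin d) ℂ) :
    partialTranspose (X3 A B C) = X3 A C B := by
  ext ⟨i, k⟩ ⟨j, l⟩
  simp only [partialTranspose, X3, of_apply]
  split_ifs <;> grind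

theorem X3_submatrix_diag {A B C : Matrix (Fin d) (Fin d) ℂ} (hAB : ∀ i, A i i = B i i) :
    (X3 A B C).submatrix (fun i => (i, i)) (fun i => (i, i)) = B := by
  ext i j
  simp only [X3, submatrix_apply, of_apply]
  split_ifs <;> grind

theorem X3_submatrix_pair {A B C : Matrix (Fin d) (Fin d) ℂ} (hAC : ∀ i, A i i = C i i)
    (i j : Fin d) :
    (X3 A B C).submatrix ![(i, j), (j, i)] ![(i, j), (j, i)] =
      !![A i j, C i j; C j i, A j i] := by
  ext a b
  fin_cases a <;> fin_cases b <;> simp [X3] <;> grind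

def X3DiagPart (B : Matrix (Fin d) (Fin d) ℂ) : Matrix (Fin d × Fin d) (Fin d × Fin d) ℂ :=
  of fun p q => if p.1 = p.2 ∧ q.1 = q.2 then B p.1 q.1 else 0

def X3OffDiagPart (A C : Matrix (Fin d) (Fin d) ℂ) :
    Matrix (Fin d × Fin d) (Fin d × Fin d) ℂ :=
  of fun p q => if p.1 = p.2 then 0 else
    (if q = p then A p.1 p.2 else 0) + (if q = p.swap then C p.1 p.2 else 0)

theorem X3_eq_X3DiagPart_add_X3OffDiagPart {A B C : Matrix (Fin d) (Fin d) ℂ}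
    (hAB : ∀ i, A i i = B i i) : X3 A B C = X3DiagPart B + X3OffDiagPart A C := by
  ext ⟨i, j⟩ ⟨k, l⟩
  simp only [X3, X3DiagPart, X3OffDiagPart, Matrix.add_apply, of_apply, Prod.mk.injEq,
    Prod.swap_prod_mk]
  split_ifs <;> grind

theorem posSemidef_X3DiagPart {B : Matrix (Fin d) (Fin d) ℂ} (hB : B.PosSemidef) :
    (X3DiagPart B).PosSemidef := by
  let D : Matrix (Fin d × Fin d) (Fin d × Fin d) ℂ :=
    diagonal fun p => if p.1 = p.2 then 1 else 0
  have hD : X3DiagPart B = Dᴴ * B.submatrix Prod.fst Prod.fst * D := by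
    ext p q
    simp only [D, X3DiagPart, of_apply, diagonal_conjTranspose, diagonal_mul, mul_diagonal,
      submatrix_apply, Pi.star_apply, apply_ite star, star_one, star_zero]
    split_ifs <;> simp_all
  rw [hD]
  exact (hB.submatrix Prod.fst).conjTranspose_mul_mul_same D

theorem X3OffDiagPart_mulVec (A C : Matrix (Fin d) (Fin d) ℂ) (x : Fin d × Fin d → ℂ)
    (p : Fin d × Fin d) : (X3OffDiagPart A C *ᵥ x) p =
      if p.1 = p.2 then 0 else A p.1 p.2 * x p + C p.1 p.2 * x p.swap := by
  split_ifs with hp <;>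
    simp [X3OffDiagPart, mulVec, dotProduct, hp, add_mul, Finset.sum_add_distrib]

theorem isHermitian_X3OffDiagPart {A C : Matrix (Fin d) (Fin d) ℂ}
    (hA : ∀ i j, i ≠ j → star (A i j) = A i j) (hC : ∀ i j, i ≠ j → star (C i j) = C j i) :
    (X3OffDiagPart A C).IsHermitian := by
  ext ⟨i, j⟩ ⟨k, l⟩
  simp only [conjTranspose_apply, X3OffDiagPart, of_apply, Prod.mk.injEq, Prod.swap_prod_mk]
  split_ifs <;> grind [star_zero]

theorem posSemidef_X3OffDiagPart {A C : Matrix (Fin d) (Fin d) ℂ}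
    (hpair : ∀ i j, i ≠ j → (!![A i j, C i j; C j i, A j i]).PosSemidef) :
    (X3OffDiagPart A C).PosSemidef := by
  have hA i j (hij : i ≠ j) : star (A i j) = A i j :=
    IsSelfAdjoint.of_nonneg (by simpa using (hpair i j hij).diag_nonneg (i := 0))
  have hC i j (hij : i ≠ j) : star (C i j) = C j i := by
    simpa using (hpair i j hij).isHermitian.apply 1 0
  refine .of_dotProduct_mulVec_nonneg (isHermitian_X3OffDiagPart hA hC) fun x => ?_
  -- The form splits into the forms of the blocks on `{p, p.swap}`, each counted twice.
  refine Complex.sum_nonneg_of_add_swap_nonneg _ fun p => ?_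
  by_cases hp : p.1 = p.2
  · simp [X3OffDiagPart_mulVec, hp]
  · convert (hpair p.1 p.2 hp).dotProduct_mulVec_nonneg ![x p, x p.swap] using 1
    simp only [dotProduct, Fin.sum_univ_two, X3OffDiagPart_mulVec, Prod.fst_swap, Prod.snd_swap,
      Prod.swap_swap, hp, Ne.symm hp, if_false, mulVec_fin_two, Pi.star_apply, cons_val_zero,
      cons_val_one, of_apply, cons_val', empty_val', cons_val_fin_one]
    ring

theorem posSemidef_X3_iff_pairs {A B C : Matrix (Fin d) (Fin d) ℂ}
    (hdiag : ∀ i, A i i = B i i ∧ A i i = C i i) :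
    (X3 A B C).PosSemidef ↔
      B.PosSemidef ∧ ∀ i j, (!![A i j, C i j; C j i, A j i]).PosSemidef := by
  constructor
  · intro hX
    refine ⟨X3_submatrix_diag (fun i => (hdiag i).1) ▸ hX.submatrix _, fun i j => ?_⟩
    exact X3_submatrix_pair (fun i => (hdiag i).2) i j ▸ hX.submatrix _
  · rintro ⟨hB, hpair⟩
    rw [X3_eq_X3DiagPart_add_X3OffDiagPart fun i => (hdiag i).1]
    exact (posSemidef_X3DiagPart hB).add (posSemidef_X3OffDiagPart fun i j _ => hpair i j)

theorem forall_posSemidef_pair_iff (A C : Matrix (Fin d) (Fin d) ℂ) :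
    (∀ i j, (!![A i j, C i j; C j i, A j i]).PosSemidef) ↔
      (∀ i j, (A i j).im = 0 ∧ 0 ≤ (A i j).re) ∧ C.IsHermitian ∧
        ∀ i j, ‖C i j‖ ^ 2 ≤ (A i j).re * (A j i).re := by
  simp only [posSemidef_fin_two_iff, of_apply, cons_val', cons_val_zero, cons_val_one,
    empty_val', cons_val_fin_one]
  constructor
  · intro h
    refine ⟨fun i j => ?_, IsHermitian.ext fun i j => (h j i).2.2.1.symm, fun i j => (h i j).2.2.2⟩
    obtain ⟨hre, him⟩ := Complex.nonneg_iff.1 (h i j).1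
    exact ⟨him.symm, hre⟩
  · rintro ⟨hA, hC, hbound⟩ i j
    have hA' k l : 0 ≤ A k l := Complex.nonneg_iff.2 ⟨(hA k l).2, (hA k l).1.symm⟩
    exact ⟨hA' i j, hA' j i, (hC.apply j i).symm, hbound i j⟩

theorem posSemidef_X3_iff {A B C : Matrix (Fin d) (Fin d) ℂ}
    (hdiag : ∀ i, A i i = B i i ∧ A i i = C i i) :
    (X3 A B C).PosSemidef ↔
      (∀ i j, (A i j).im = 0 ∧ 0 ≤ (A i j).re) ∧ B.PosSemidef ∧ C.IsHermitian ∧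
        ∀ i j, ‖C i j‖ ^ 2 ≤ (A i j).re * (A j i).re := by
  rw [posSemidef_X3_iff_pairs hdiag, forall_posSemidef_pair_iff]
  tauto

end

theorem stmt5 {d : ℕ} (A B C : Matrix (Fin d) (Fin d) ℂ)
    (hdiag : ∀ i, A i i = B i i ∧ A i i = C i i) :
    ((X3 A B C).PosSemidef ↔
      (∀ i j, (A i j).im = 0 ∧ 0 ≤ (A i j).re) ∧ B.PosSemidef ∧ C.IsHermitian ∧
        ∀ i j, ‖C i j‖ ^ 2 ≤ (A i j).re * (A j i).re) ∧
    ((partialTranspose (X3 A B C)).PosSemidef ↔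
      (∀ i j, (A i j).im = 0 ∧ 0 ≤ (A i j).re) ∧ B.IsHermitian ∧ C.PosSemidef ∧
        ∀ i j, ‖B i j‖ ^ 2 ≤ (A i j).re * (A j i).re) := by
  refine ⟨posSemidef_X3_iff hdiag, ?_⟩
  rw [partialTranspose_X3, posSemidef_X3_iff fun i => (hdiag i).symm]
  tauto
end

section
/- Let d ≥ 2 and let a, b be real numbers. Define the Werner matrix X^{wer}_{a,b} = a(I_d ⊗ I_d) + b·Σ_{i,j=1}^d |ij⟩⟨ji| and the isotropic matrix X^{iso}_{a,b} = a(I_d ⊗ I_d) + b·Σ_{i,j=1}^d |ii⟩⟨jj| in M_d(ℂ)⊗M_d(ℂ). Then the following are equivalent: (i) X^{wer}_{a,b} is PPT; (ii) X^{wer}_{a,b} is separable; (iii) X^{iso}_{a,b} is separable; (iv) X^{iso}_{a,b} is PPT; (v) a ≥ 0 and −a/d ≤ b ≤ a. -/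
open Matrix Kronecker
open scoped ComplexOrder

/-- A bipartite matrix is separable if it is a finite sum of Kronecker products of
rank-one matrices `v v^*` and `w w^*`. -/
def Separable {d : ℕ} (X : Matrix (Fin d × Fin d) (Fin d × Fin d) ℂ) : Prop :=
  ∃ (n : ℕ) (v w : Fin n → Fin d → ℂ),
    X = ∑ k, (Matrix.vecMulVec (v k) (star (v k))) ⊗ₖ (Matrix.vecMulVec (w k) (star (w k)))

/-- A bipartite matrix is PPT if both it and its partial transpose are
positive semidefinite. -/
def IsPPT {d : ℕ} (X : Matrix (Fin d × Fin d) (Fin d × Fin d) ℂ) : Prop :=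
  X.PosSemidef ∧ (partialTranspose X).PosSemidef

/-- The Werner matrix `a (I ⊗ I) + b Σ_{i,j} |ij⟩⟨ji|`. -/
noncomputable def werner (d : ℕ) (a b : ℝ) :
    Matrix (Fin d × Fin d) (Fin d × Fin d) ℂ :=
  (a : ℂ) • (1 : Matrix (Fin d × Fin d) (Fin d × Fin d) ℂ) +
    (b : ℂ) • (Matrix.of fun p q => if p.1 = q.2 ∧ p.2 = q.1 then (1 : ℂ) else 0)

/-- The isotropic matrix `a (I ⊗ I) + b Σ_{i,j} |ii⟩⟨jj|`. -/
noncomputable def isotropic (d : ℕ) (a b : ℝ) :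
    Matrix (Fin d × Fin d) (Fin d × Fin d) ℂ :=
  (a : ℂ) • (1 : Matrix (Fin d × Fin d) (Fin d × Fin d) ℂ) +
    (b : ℂ) • (Matrix.of fun p q => if p.1 = p.2 ∧ q.1 = q.2 then (1 : ℂ) else 0)

/-!
Partial transposition swaps the Werner and isotropic matrices and preserves separability, and
separable matrices are PPT. So it remains to see that a PPT Werner matrix satisfies (v), by testing
`X^wer` on `e₀₁ - e₁₀` and `X^iso` on `Σᵢ eᵢᵢ`, and that (v) makes `X^wer` separable. For the
latter, write `a = α + dγ`, `b = α - γ` with `α, γ ≥ 0`. Averaging the product vectors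
`φ ⊗ (φ ⊙ y)` over all phase vectors `φ ∈ {1, i, -1, -i}^d` kills every entry except those with
`{i₁, i₂} = {j₁, j₂}`, because fourth roots of unity separate multisets of size at most three;
the surviving entries are `4^d G(i₂, j₂)`, with `G` the Gram matrix of the `y`'s. Choosing
`y = 1` and `y = d eₖ - 1` produces `α (1 + F)` and `γ (d - F)`, where `F = Σ |ij⟩⟨ji|`, up to a
nonnegative diagonal.
-/

lemma sum_fin_four_I_pow_mul_neg_I_pow {A B : ℕ} (hA : A < 4) (hB : B < 4) :
    ∑ k : Fin 4, Complex.I ^ ((k : ℕ) * A) * (-Complex.I) ^ ((k : ℕ) * B) =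
      if A = B then 4 else 0 := by
  interval_cases A <;> interval_cases B <;> norm_num [Fin.sum_univ_four, pow_succ, pow_mul]

lemma Multiset.pair_eq_pair_iff {α : Type*} (p q : α × α) :
    ({p.1, p.2} : Multiset α) = {q.1, q.2} ↔ p = q ∨ p = q.swap := by
  obtain ⟨a, b⟩ := p
  obtain ⟨c, e⟩ := q
  simp only [Multiset.insert_eq_cons, Multiset.cons_eq_cons, Multiset.singleton_inj,
    Multiset.singleton_eq_cons_iff]
  grind

def phase {ι : Type*} (c : ι → Fin 4) (m : ι) : ℂ := Complex.I ^ (c m : ℕ)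

section Phase

variable {ι : Type*} [Fintype ι] [DecidableEq ι]

lemma Multiset.prod_map_pow_eq_prod_univ (s : Multiset ι) (c : ι → ℕ) (z : ℂ) :
    (s.map fun m => z ^ c m).prod = ∏ m, z ^ (c m * s.count m) := by
  simp_rw [Finset.prod_multiset_map_count, pow_mul]
  refine Finset.prod_subset (Finset.subset_univ _) fun m _ hm => ?_
  rw [Multiset.count_eq_zero.2 (by simpa using hm), pow_zero]

lemma sum_prod_map_I_pow_mul_prod_map_neg_I_pow (s t : Multiset ι)
    (hs : Multiset.card s < 4) (ht : Multiset.card t < 4) :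
    ∑ c : ι → Fin 4, (s.map fun m => Complex.I ^ (c m : ℕ)).prod *
        (t.map fun m => (-Complex.I) ^ (c m : ℕ)).prod =
      if s = t then 4 ^ Fintype.card ι else 0 := by
  simp_rw [Multiset.prod_map_pow_eq_prod_univ, ← Finset.prod_mul_distrib]
  rw [← Fintype.prod_sum fun m (k : Fin 4) =>
    Complex.I ^ ((k : ℕ) * s.count m) * (-Complex.I) ^ ((k : ℕ) * t.count m)]
  simp_rw [sum_fin_four_I_pow_mul_neg_I_pow ((s.count_le_card _).trans_lt hs)
    ((t.count_le_card _).trans_lt ht)]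
  split_ifs with h
  · simp [h]
  · obtain ⟨m, hm⟩ : ∃ m, s.count m ≠ t.count m := by
      by_contra! h'
      exact h (Multiset.ext.2 h')
    exact Finset.prod_eq_zero (Finset.mem_univ m) (if_neg hm)

lemma sum_phase_mul_star (p q : ι × ι) :
    ∑ c : ι → Fin 4, phase c p.1 * phase c p.2 * star (phase c q.1 * phase c q.2) =
      if p = q ∨ p = q.swap then 4 ^ Fintype.card ι else 0 := by
  have h :=
    sum_prod_map_I_pow_mul_prod_map_neg_I_pow {p.1, p.2} {q.1, q.2} (by simp) (by simp)
  simp only [Multiset.pair_eq_pair_iff] at h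
  rw [← h]
  simp [phase, Complex.conj_I, mul_assoc]

def phaseTwirl {κ : Type*} [Fintype κ] (y : κ → ι → ℂ) : Matrix (ι × ι) (ι × ι) ℂ :=
  ∑ ck : (ι → Fin 4) × κ, vecMulVec (phase ck.1) (star (phase ck.1)) ⊗ₖ
    vecMulVec (phase ck.1 * y ck.2) (star (phase ck.1 * y ck.2))

lemma phaseTwirl_apply {κ : Type*} [Fintype κ] (y : κ → ι → ℂ) (p q : ι × ι) :
    phaseTwirl y p q = if p = q ∨ p = q.swap
      then 4 ^ Fintype.card ι * ∑ k, y k p.2 * star (y k q.2) else 0 := by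
  calc phaseTwirl y p q
      = (∑ c : ι → Fin 4, phase c p.1 * phase c p.2 * star (phase c q.1 * phase c q.2)) *
          ∑ k, y k p.2 * star (y k q.2) := by
        rw [Finset.sum_mul_sum, phaseTwirl, Matrix.sum_apply, Fintype.sum_prod_type]
        refine Finset.sum_congr rfl fun c _ => Finset.sum_congr rfl fun k _ => ?_
        simp only [kroneckerMap_apply, vecMulVec_apply, Pi.star_apply, Pi.mul_apply, star_mul]
        ring
    _ = _ := by rw [sum_phase_mul_star, ite_mul, zero_mul]

end Phase

section Separable

variable {d : ℕ}

lemma separable_sum_kronecker {K : Type*} [Fintype K] (v w : K → Fin d → ℂ) :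
    Separable (∑ k, vecMulVec (v k) (star (v k)) ⊗ₖ vecMulVec (w k) (star (w k))) := by
  let e := Fintype.equivFin K
  exact ⟨Fintype.card K, v ∘ e.symm, w ∘ e.symm, (e.symm.sum_comp _).symm⟩

lemma Separable.add {X Y : Matrix (Fin d × Fin d) (Fin d × Fin d) ℂ}
    (hX : Separable X) (hY : Separable Y) : Separable (X + Y) := by
  obtain ⟨n, v, w, rfl⟩ := hX
  obtain ⟨m, v', w', rfl⟩ := hY
  simpa [Fintype.sum_sum_type] using separable_sum_kronecker (Sum.elim v v') (Sum.elim w w')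

lemma Separable.smul {X : Matrix (Fin d × Fin d) (Fin d × Fin d) ℂ} {t : ℝ} (ht : 0 ≤ t)
    (hX : Separable X) : Separable ((t : ℂ) • X) := by
  obtain ⟨n, v, w, rfl⟩ := hX
  refine ⟨n, v, fun k => (Real.sqrt t : ℂ) • w k, ?_⟩
  simp only [Finset.smul_sum, star_smul, vecMulVec_smul, smul_vecMulVec, kronecker_smul,
    smul_smul]
  rw [Complex.star_def, Complex.conj_ofReal, ← Complex.ofReal_mul, Real.mul_self_sqrt ht]

lemma Separable.posSemidef {X : Matrix (Fin d × Fin d) (Fin d × Fin d) ℂ} (hX : Separable X) :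
    X.PosSemidef := by
  obtain ⟨n, v, w, rfl⟩ := hX
  exact posSemidef_sum _ fun k _ =>
    (posSemidef_vecMulVec_self_star _).kronecker (posSemidef_vecMulVec_self_star _)

lemma Separable.partialTranspose {X : Matrix (Fin d × Fin d) (Fin d × Fin d) ℂ}
    (hX : Separable X) : Separable (partialTranspose X) := by
  obtain ⟨n, v, w, rfl⟩ := hX
  refine ⟨n, v, fun k => star (w k), ?_⟩
  ext p q
  simp only [_root_.partialTranspose, of_apply, Matrix.sum_apply, kroneckerMap_apply,
    vecMulVec_apply, Pi.star_apply, star_star]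
  refine Finset.sum_congr rfl fun k _ => ?_
  ring

lemma Separable.isPPT {X : Matrix (Fin d × Fin d) (Fin d × Fin d) ℂ} (hX : Separable X) :
    IsPPT X :=
  ⟨hX.posSemidef, hX.partialTranspose.posSemidef⟩

lemma separable_phaseTwirl {κ : Type*} [Fintype κ] (y : κ → Fin d → ℂ) :
    Separable (phaseTwirl y) :=
  separable_sum_kronecker _ _

lemma separable_diagonal (f : Fin d × Fin d → ℝ) (hf : ∀ p, 0 ≤ f p) :
    Separable (diagonal fun p => (f p : ℂ)) := by
  convert separable_sum_kronecker (fun p : Fin d × Fin d => Pi.single p.1 (Real.sqrt (f p) : ℂ))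
    (fun p => Pi.single p.2 1) using 1
  ext ⟨i, j⟩ ⟨k, l⟩
  rcases eq_or_ne i k with rfl | hik <;> rcases eq_or_ne j l with rfl | hjl <;>
    simp [Matrix.sum_apply, vecMulVec_apply, Pi.single_apply, Fintype.sum_prod_type, ite_mul,
      mul_ite, ← Complex.ofReal_mul, Real.mul_self_sqrt (hf _), *]

lemma separable_symmetrizedGram {κ : Type*} [Fintype κ] (y : κ → Fin d → ℂ) :
    Separable (of fun p q : Fin d × Fin d =>
      if p = q ∨ p = q.swap then ∑ k, y k p.2 * star (y k q.2) else 0) := by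
  convert (separable_phaseTwirl y).smul (t := (4 ^ d)⁻¹) (by positivity) using 1
  ext p q
  rw [Matrix.smul_apply, phaseTwirl_apply, Fintype.card_fin, of_apply, smul_eq_mul]
  push_cast
  split_ifs
  · field_simp
  · simp

end Separable

section Werner

variable {d : ℕ}

lemma partialTranspose_partialTranspose (X : Matrix (Fin d × Fin d) (Fin d × Fin d) ℂ) :
    partialTranspose (partialTranspose X) = X :=
  rfl

lemma IsPPT.partialTranspose {X : Matrix (Fin d × Fin d) (Fin d × Fin d) ℂ} (hX : IsPPT X) :
    IsPPT (partialTranspose X) :=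
  ⟨hX.2, hX.1⟩

lemma partialTranspose_werner (a b : ℝ) :
    partialTranspose (werner d a b) = isotropic d a b := by
  ext p q
  simp only [partialTranspose, werner, isotropic, of_apply, Matrix.add_apply, Matrix.smul_apply,
    one_apply, Prod.ext_iff]
  congr 3 <;> simp only [eq_comm]

lemma separable_werner_add_mul_sub {α γ : ℝ} (hα : 0 ≤ α) (hγ : 0 ≤ γ) :
    Separable (werner d (α + d * γ) (α - γ)) := by
  have h₁ := separable_symmetrizedGram (fun (_ : Unit) (_ : Fin d) => (1 : ℂ))
  have h₂ := separable_symmetrizedGram fun k m : Fin d => (if k = m then (d : ℂ) else 0) - 1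
  have h₃ := separable_diagonal (fun p : Fin d × Fin d => if p.1 = p.2 then α else γ)
    fun p => by split_ifs <;> assumption
  convert (h₁.smul hα).add ((h₂.smul (div_nonneg hγ d.cast_nonneg)).add h₃) using 1
  ext ⟨i, j⟩ ⟨k, l⟩
  have hd : (d : ℂ) ≠ 0 := Nat.cast_ne_zero.2 (Fin.pos i).ne'
  have gram : ∀ i j : Fin d, ∑ k : Fin d, ((if k = i then (d : ℂ) else 0) - 1) *
      star ((if k = j then (d : ℂ) else 0) - 1) = d * ((if i = j then (d : ℂ) else 0) - 1) := by
    intro i j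
    simp [sub_mul, mul_sub, Finset.sum_sub_distrib, ite_mul, mul_ite, apply_ite (starRingEnd ℂ),
      eq_comm (a := i)]
  simp only [werner, of_apply, Matrix.add_apply, Matrix.smul_apply, one_apply, diagonal_apply,
    gram, Prod.mk.injEq, Prod.swap_prod_mk, smul_eq_mul, Finset.univ_unique,
    Finset.sum_singleton, star_one, mul_one]
  push_cast
  split_ifs <;> first | (exfalso; grind) | (field_simp; ring)

lemma separable_werner (hd : 0 < d) {a b : ℝ} (hab : -a / d ≤ b) (hba : b ≤ a) :
    Separable (werner d a b) := by
  have hd' : (0 : ℝ) < d := Nat.cast_pos.2 hd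
  have hα : 0 ≤ (a + d * b) / (d + 1) :=
    div_nonneg (by linarith [(div_le_iff₀ hd').1 hab]) (by positivity)
  have hγ : 0 ≤ (a - b) / (d + 1) := div_nonneg (by linarith) (by positivity)
  convert separable_werner_add_mul_sub hα hγ using 2 <;> field_simp <;> ring

lemma Matrix.PosSemidef.apply_add_apply_le {n : Type*} [Fintype n] [DecidableEq n]
    {M : Matrix n n ℂ} (hM : M.PosSemidef) (p q : n) :
    M p q + M q p ≤ M p p + M q q := by
  have h := hM.dotProduct_mulVec_nonneg (Pi.single p 1 - Pi.single q 1)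
  simp only [mulVec_sub, sub_dotProduct, dotProduct_sub, mulVec_single_one, star_sub,
    ← Pi.single_star, star_one, single_dotProduct, one_mul, col_apply] at h
  rw [← sub_nonneg]
  convert h using 1
  ring

lemma le_of_posSemidef_werner (hd : 2 ≤ d) {a b : ℝ} (h : (werner d a b).PosSemidef) :
    b ≤ a := by
  let i : Fin d := ⟨0, by omega⟩
  let j : Fin d := ⟨1, by omega⟩
  have hij : i ≠ j := by simp [i, j, Fin.ext_iff]
  have h' : ((b + b : ℝ) : ℂ) ≤ ((a + a : ℝ) : ℂ) := by
    simpa [werner, one_apply, hij, hij.symm] using h.apply_add_apply_le (i, j) (j, i)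
  linarith [Complex.real_le_real.1 h']

def maxEntangled (d : ℕ) : Fin d × Fin d → ℂ := fun p => if p.1 = p.2 then 1 else 0

lemma isotropic_eq_smul_one_add_smul_vecMulVec (a b : ℝ) :
    isotropic d a b =
      (a : ℂ) • 1 + (b : ℂ) • vecMulVec (maxEntangled d) (star (maxEntangled d)) := by
  ext p q
  simp [isotropic, maxEntangled, vecMulVec_apply, ← ite_and, and_comm]

lemma star_maxEntangled_dotProduct : star (maxEntangled d) ⬝ᵥ maxEntangled d = d := by
  simp [maxEntangled, dotProduct, Fintype.sum_prod_type]

lemma star_maxEntangled_dotProduct_isotropic_mulVec (a b : ℝ) :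
    star (maxEntangled d) ⬝ᵥ (isotropic d a b *ᵥ maxEntangled d) =
      ((a * d + b * d ^ 2 : ℝ) : ℂ) := by
  rw [isotropic_eq_smul_one_add_smul_vecMulVec, add_mulVec, smul_mulVec, smul_mulVec, one_mulVec,
    vecMulVec_mulVec, dotProduct_add, dotProduct_smul, dotProduct_smul, dotProduct_smul,
    star_maxEntangled_dotProduct]
  simp only [smul_eq_mul, MulOpposite.op_natCast, MulOpposite.smul_eq_mul_unop,
    MulOpposite.unop_natCast]
  push_cast
  ring

lemma neg_le_mul_of_posSemidef_isotropic (hd : 0 < d) {a b : ℝ}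
    (h : (isotropic d a b).PosSemidef) : -a ≤ d * b := by
  have h' := h.dotProduct_mulVec_nonneg (maxEntangled d)
  rw [star_maxEntangled_dotProduct_isotropic_mulVec, Complex.zero_le_real] at h'
  have hd' : (0 : ℝ) < d := Nat.cast_pos.2 hd
  nlinarith

lemma werner_bounds_of_isPPT (hd : 2 ≤ d) {a b : ℝ} (h : IsPPT (werner d a b)) :
    0 ≤ a ∧ -a / d ≤ b ∧ b ≤ a := by
  have hd' : (0 : ℝ) < d := Nat.cast_pos.2 (by omega)
  have h₁ := le_of_posSemidef_werner hd h.1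
  have h₂ := neg_le_mul_of_posSemidef_isotropic (by omega) (partialTranspose_werner a b ▸ h.2)
  exact ⟨by nlinarith, (div_le_iff₀ hd').2 (by linarith), h₁⟩

end Werner

theorem stmt9 {d : ℕ} (hd : 2 ≤ d) (a b : ℝ) :
    [IsPPT (werner d a b),
     Separable (werner d a b),
     Separable (isotropic d a b),
     IsPPT (isotropic d a b),
     0 ≤ a ∧ -a / d ≤ b ∧ b ≤ a].TFAE := by
  have hW : partialTranspose (werner d a b) = isotropic d a b := partialTranspose_werner a b
  have hI : partialTranspose (isotropic d a b) = werner d a b := by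
    rw [← hW, partialTranspose_partialTranspose]
  tfae_have 2 → 3 := fun h => hW ▸ h.partialTranspose
  tfae_have 3 → 4 := Separable.isPPT
  tfae_have 4 → 1 := fun h => hI ▸ h.partialTranspose
  tfae_have 1 → 5 := werner_bounds_of_isPPT hd
  tfae_have 5 → 2 := fun h => separable_werner (by omega) h.2.1 h.2.2
  tfae_finish
end
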